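/- arXiv:1510.04569 — 3 statements merged into one kernel-verified Lean document; each statement's English description precedes it below -/
import Mathlib

section
/- Let (𝔛,d) be a metric space equipped with a Borel measure m, let z₀ ∈ 𝔛, and set V(t) = m(B(z₀,t)), assumed finite and strictly positive for every t > 0. Assume there is C_V > 1 with V(2t) ≤ C_V V(t) for all t > 0, and that there exist a natural number n₀ ≥ 2, a constant c₂ > 1 and r₀ > 0 such that V(n₀ t) ≥ c₂ V(t) for all t ≥ r₀. Let Φ : (0,∞) → (0,∞) be nondecreasing with Φ(2t) ≤ C_Φ Φ(t) for all t > 0 for some C_Φ > 1. Let j : 𝔛 → [0,∞] be measurable and suppose there is κ > 0 such that j(y) ≥ κ/(V(s)Φ(s)) for every s ≥ r₀ and every y ∈ 𝔛 with s ≤ d(z₀,y) ≤ 2s. Then there exists a constant c > 0, depending only on C_V, C_Φ, c₂, n₀ and κ, such that for every s ≥ r₀ one has ∫_{{y : d(z₀,y) ≥ s}} j dm ≥ c/Φ(s). -/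
/-!
Cover `[s, 2^{n₀} s)` by the dyadic shells `[2^i s, 2^{i+1} s]`, `i < n₀`. On the shell of index
`i` the assumed bound gives `j ≥ κ / (V(2^i s) Φ(2^i s)) ≥ κ / (V(2^{n₀} s) C_Φ^{n₀} Φ(s))` by
monotonicity of `V` and doubling of `Φ`. Since `2^{n₀} > n₀`, reverse doubling gives
`V(s) ≤ c₂⁻¹ V(2^{n₀} s)`, so the annulus `B(z₀, 2^{n₀} s) \ B(z₀, s)` has measure at least
`(1 - c₂⁻¹) V(2^{n₀} s)`, and the factor `V(2^{n₀} s)` cancels.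
-/

open MeasureTheory Metric Set
open scoped ENNReal NNReal

theorem exists_two_pow_mul_le_le_two_pow_succ_mul {k : ℕ} {s d : ℝ} (h₁ : s ≤ d)
    (h₂ : d < 2 ^ k * s) : ∃ i < k, 2 ^ i * s ≤ d ∧ d ≤ 2 ^ (i + 1) * s := by
  induction k with
  | zero => simp only [pow_zero, one_mul] at h₂; linarith
  | succ k ih =>
    by_cases h : d < 2 ^ k * s
    · obtain ⟨i, hik, hi⟩ := ih h
      exact ⟨i, hik.trans k.lt_succ_self, hi⟩
    · exact ⟨k, k.lt_succ_self, le_of_not_gt h, h₂.le⟩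

theorem le_pow_mul_of_doubling {f : ℝ → ℝ} {C : ℝ} (hC : 0 ≤ C)
    (hf : ∀ t, 0 < t → f (2 * t) ≤ C * f t) {t : ℝ} (ht : 0 < t) (i : ℕ) :
    f (2 ^ i * t) ≤ C ^ i * f t := by
  induction i with
  | zero => simp
  | succ i ih =>
    calc f (2 ^ (i + 1) * t) = f (2 * (2 ^ i * t)) := by ring_nf
      _ ≤ C * f (2 ^ i * t) := hf _ (by positivity)
      _ ≤ C * (C ^ i * f t) := by gcongr
      _ = C ^ (i + 1) * f t := by ring

theorem MeasureTheory.one_sub_inv_mul_le_measure_sdiff {α : Type*} [MeasurableSpace α]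
    {μ : Measure α} {s t : Set α} (hst : s ⊆ t) (hs : NullMeasurableSet s μ) (hμs : μ s ≠ ∞)
    {c : ℝ≥0∞} (hc₀ : c ≠ 0) (hc : c ≠ ∞) (h : c * μ s ≤ μ t) :
    (1 - c⁻¹) * μ t ≤ μ (t \ s) := by
  rw [measure_sdiff hst hs hμs]
  rcases eq_or_ne (μ t) ∞ with ht | ht
  · simp [ht, hμs]
  · rw [ENNReal.sub_mul fun _ _ ↦ ht, one_mul]
    exact tsub_le_tsub_left ((ENNReal.mul_le_iff_le_inv hc₀ hc).1 h) _

theorem ENNReal.div_mul_mul_cancel {a b c d : ℝ≥0∞} (hc₀ : c ≠ 0) (hc : c ≠ ∞) :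
    a / (c * b) * (d * c) = a * d / b := by
  rw [← ENNReal.mul_div_mul_right (a * d) b hc₀ hc, mul_comm c b]
  simp only [div_eq_mul_inv]
  ring

theorem div_le_of_mem_ball_diff_ball {X : Type*} [MetricSpace X] [MeasurableSpace X]
    (m : Measure X) {z₀ : X} {Φ : ℝ → ℝ} {C_Φ : ℝ} (hCΦ : 1 ≤ C_Φ)
    (hΦdoub : ∀ t : ℝ, 0 < t → Φ (2 * t) ≤ C_Φ * Φ t) {j : X → ℝ≥0∞} {κ r₀ : ℝ}
    (hjlow : ∀ s : ℝ, r₀ ≤ s → ∀ y : X, s ≤ dist z₀ y → dist z₀ y ≤ 2 * s →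
      ENNReal.ofReal κ / (m (ball z₀ s) * ENNReal.ofReal (Φ s)) ≤ j y)
    {s : ℝ} (hs : r₀ ≤ s) (hs₀ : 0 < s) (hΦs : 0 ≤ Φ s) {k : ℕ} {y : X}
    (hy : y ∈ ball z₀ (2 ^ k * s) \ ball z₀ s) :
    ENNReal.ofReal κ / (m (ball z₀ (2 ^ k * s)) * ENNReal.ofReal (C_Φ ^ k * Φ s)) ≤ j y := by
  rw [mem_sdiff, mem_ball', mem_ball', not_lt] at hy
  obtain ⟨i, hik, hi₁, hi₂⟩ := exists_two_pow_mul_le_le_two_pow_succ_mul hy.2 hy.1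
  have hsi : s ≤ 2 ^ i * s := le_mul_of_one_le_left hs₀.le (one_le_pow₀ one_le_two)
  refine le_trans (ENNReal.div_le_div_left (mul_le_mul' ?_ ?_) _)
    (hjlow _ (hs.trans hsi) y hi₁ (by rwa [pow_succ, mul_right_comm, mul_comm _ 2] at hi₂))
  · exact measure_mono (ball_subset_ball (by gcongr; norm_num))
  · refine ENNReal.ofReal_le_ofReal ((le_pow_mul_of_doubling (by linarith) hΦdoub hs₀ i).trans ?_)
    gcongr

theorem tail_integral_lower_bound_at_infinity_general
    {X : Type*} [MetricSpace X] [MeasurableSpace X] [BorelSpace X]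
    (m : Measure X) (z₀ : X)
    (hVpos : ∀ t : ℝ, 0 < t → 0 < m (ball z₀ t))
    (hVfin : ∀ t : ℝ, 0 < t → m (ball z₀ t) < ⊤)
    (n₀ : ℕ) (c₂ : ℝ≥0) (hc₂ : 1 < c₂) (r₀ : ℝ) (hr₀ : 0 < r₀)
    (hVrev : ∀ t : ℝ, r₀ ≤ t → (c₂ : ℝ≥0∞) * m (ball z₀ t) ≤ m (ball z₀ (n₀ * t)))
    (Φ : ℝ → ℝ) (hΦpos : ∀ t : ℝ, 0 < t → 0 < Φ t)
    (C_Φ : ℝ) (hCΦ : 1 < C_Φ)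
    (hΦdoub : ∀ t : ℝ, 0 < t → Φ (2 * t) ≤ C_Φ * Φ t)
    (j : X → ℝ≥0∞) (κ : ℝ) (hκ : 0 < κ)
    (hjlow : ∀ s : ℝ, r₀ ≤ s → ∀ y : X, s ≤ dist z₀ y → dist z₀ y ≤ 2 * s →
      ENNReal.ofReal κ / (m (ball z₀ s) * ENNReal.ofReal (Φ s)) ≤ j y) :
    ∃ c : ℝ, 0 < c ∧ ∀ s : ℝ, r₀ ≤ s →
      ENNReal.ofReal (c / Φ s) ≤ ∫⁻ y in {y : X | s ≤ dist z₀ y}, j y ∂m := by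
  have hc₂₀ : (0 : ℝ) < c₂ := zero_lt_one.trans hc₂
  have hc₂inv : (0 : ℝ) < 1 - (c₂ : ℝ)⁻¹ := sub_pos.2 (inv_lt_one_of_one_lt₀ hc₂)
  refine ⟨κ * (1 - (c₂ : ℝ)⁻¹) / C_Φ ^ n₀, by positivity, fun s hs ↦ ?_⟩
  have hs₀ : 0 < s := hr₀.trans_le hs
  have hΦs := hΦpos s hs₀
  set R := 2 ^ n₀ * s
  have hsR : s ≤ R := le_mul_of_one_le_left hs₀.le (one_le_pow₀ one_le_two)
  have hnR : n₀ * s ≤ R :=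
    mul_le_mul_of_nonneg_right (by exact_mod_cast Nat.lt_two_pow_self.le) hs₀.le
  set A := ball z₀ R \ ball z₀ s
  have hmA : (1 - (c₂ : ℝ≥0∞)⁻¹) * m (ball z₀ R) ≤ m A :=
    one_sub_inv_mul_le_measure_sdiff (ball_subset_ball hsR) measurableSet_ball.nullMeasurableSet
      (hVfin s hs₀).ne (by simpa using hc₂₀.ne') ENNReal.coe_ne_top
      ((hVrev s hs).trans (measure_mono (ball_subset_ball hnR)))
  have hAtail : A ⊆ {y | s ≤ dist z₀ y} := fun y hy ↦ by simpa [A, dist_comm] using hy.2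
  calc ENNReal.ofReal (κ * (1 - (c₂ : ℝ)⁻¹) / C_Φ ^ n₀ / Φ s)
      = ENNReal.ofReal κ / (m (ball z₀ R) * ENNReal.ofReal (C_Φ ^ n₀ * Φ s)) *
          ((1 - (c₂ : ℝ≥0∞)⁻¹) * m (ball z₀ R)) := by
        rw [ENNReal.div_mul_mul_cancel (hVpos R (by positivity)).ne' (hVfin R (by positivity)).ne,
          div_div, ENNReal.ofReal_div_of_pos (by positivity), ENNReal.ofReal_mul hκ.le,
          ENNReal.ofReal_sub _ (by positivity), ENNReal.ofReal_one,
          ENNReal.ofReal_inv_of_pos hc₂₀, ENNReal.ofReal_coe_nnreal]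
    _ ≤ ∫⁻ _ in A, ENNReal.ofReal κ / (m (ball z₀ R) * ENNReal.ofReal (C_Φ ^ n₀ * Φ s)) ∂m := by
        rw [setLIntegral_const]; gcongr
    _ ≤ ∫⁻ y in A, j y ∂m := setLIntegral_mono' (measurableSet_ball.diff measurableSet_ball)
        fun y hy ↦ div_le_of_mem_ball_diff_ball m hCΦ.le hΦdoub hjlow hs hs₀ hΦs.le hy
    _ ≤ ∫⁻ y in {y | s ≤ dist z₀ y}, j y ∂m := lintegral_mono_set hAtail

/-- Annulus-decomposition tail lower bound for the jump density at large scales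
(Section 3 of the paper). -/
theorem tail_integral_lower_bound_at_infinity
    {X : Type*} [MetricSpace X] [MeasurableSpace X] [BorelSpace X]
    (m : Measure X) (z₀ : X)
    (hVpos : ∀ t : ℝ, 0 < t → 0 < m (ball z₀ t))
    (hVfin : ∀ t : ℝ, 0 < t → m (ball z₀ t) < ⊤)
    (C_V : ℝ≥0) (hCV : 1 < C_V)
    (hVdoub : ∀ t : ℝ, 0 < t → m (ball z₀ (2 * t)) ≤ (C_V : ℝ≥0∞) * m (ball z₀ t))
    (n₀ : ℕ) (hn₀ : 2 ≤ n₀) (c₂ : ℝ≥0) (hc₂ : 1 < c₂) (r₀ : ℝ) (hr₀ : 0 < r₀)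
    (hVrev : ∀ t : ℝ, r₀ ≤ t → (c₂ : ℝ≥0∞) * m (ball z₀ t) ≤ m (ball z₀ (n₀ * t)))
    (Φ : ℝ → ℝ) (hΦpos : ∀ t : ℝ, 0 < t → 0 < Φ t)
    (hΦmono : ∀ s t : ℝ, 0 < s → s ≤ t → Φ s ≤ Φ t)
    (C_Φ : ℝ) (hCΦ : 1 < C_Φ)
    (hΦdoub : ∀ t : ℝ, 0 < t → Φ (2 * t) ≤ C_Φ * Φ t)
    (j : X → ℝ≥0∞) (hj : Measurable j) (κ : ℝ) (hκ : 0 < κ)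
    (hjlow : ∀ s : ℝ, r₀ ≤ s → ∀ y : X, s ≤ dist z₀ y → dist z₀ y ≤ 2 * s →
      ENNReal.ofReal κ / (m (ball z₀ s) * ENNReal.ofReal (Φ s)) ≤ j y) :
    ∃ c : ℝ, 0 < c ∧ ∀ s : ℝ, r₀ ≤ s →
      ENNReal.ofReal (c / Φ s) ≤ ∫⁻ y in {y : X | s ≤ dist z₀ y}, j y ∂m :=
  tail_integral_lower_bound_at_infinity_general m z₀ hVpos hVfin n₀ c₂ hc₂ r₀ hr₀ hVrev Φ hΦpos C_Φ
    hCΦ hΦdoub j κ hκ hjlow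
end

section
/- Let (𝔛,d) be a metric space equipped with a Borel measure m, let z₀ ∈ 𝔛, and set V(t) = m(B(z₀,t)), assumed finite and strictly positive for every t > 0. Assume there is C_V > 1 with V(2t) ≤ C_V V(t) for all t > 0. Let Φ : (0,∞) → (0,∞) be nondecreasing with Φ(2t) ≤ C_Φ Φ(t) for all t > 0 for some C_Φ > 1. Assume there exist a natural number n₀ ≥ 2, a constant c₂ > 1 and r₀ > 0 such that V(n₀ t) ≥ c₂ V(t) for all 0 < t ≤ r₀. Let j : 𝔛 → [0,∞] be measurable and suppose there is κ > 0 such that j(y) ≥ κ/(V(s)Φ(s)) for every 0 < s ≤ r₀ and every y ∈ 𝔛 with s/2 ≤ d(z₀,y) ≤ s. Then there exists a constant c > 0, depending only on C_V, C_Φ, c₂, n₀ and κ, such that for every 0 < r ≤ r₀/(4n₀) one has ∫_{{y : 2r ≤ d(z₀,y) < 2n₀ r}} j dm ≥ c/Φ(r). -/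
/-!
The annulus `A = B(z₀, 2n₀r) \ B(z₀, 2r)` has measure at least `(c₂ - 1) V(2r)` by reverse
doubling. A point `y ∈ A` lies in the shell of radius `s = 2 d(z₀, y) ≤ 4n₀r ≤ r₀`, so
`j(y) ≥ κ / (V(4n₀r) Φ(4n₀r))`. Since `4n₀ ≤ 2^(n₀+2)`, doubling gives
`V(4n₀r) ≤ C_V^(n₀+1) V(2r)` and `Φ(4n₀r) ≤ C_Φ^(n₀+2) Φ(r)`, and the volume `V(2r)` cancels.
-/

open MeasureTheory Metric Set
open scoped ENNReal NNReal

theorem MonotoneOn.le_pow_mul_of_le_two_pow_mul {α : Type*} [CommSemiring α] [PartialOrder α]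
    [IsOrderedRing α] {F : ℝ → α} {C : α} (hF : MonotoneOn F (Ioi 0)) (hC : 0 ≤ C)
    (hdoub : ∀ t, 0 < t → F (2 * t) ≤ C * F t) (k : ℕ) {s t : ℝ} (hs : 0 < s)
    (hst : s ≤ 2 ^ k * t) : F s ≤ C ^ k * F t := by
  have ht : 0 < t := pos_of_mul_pos_right (hs.trans_le hst) (by positivity)
  have iterate : ∀ k : ℕ, F (2 ^ k * t) ≤ C ^ k * F t := by
    intro k
    induction k with
    | zero => simp
    | succ k ih =>
      calc F (2 ^ (k + 1) * t) = F (2 * (2 ^ k * t)) := by ring_nf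
        _ ≤ C * F (2 ^ k * t) := hdoub _ (by positivity)
        _ ≤ C * (C ^ k * F t) := mul_le_mul_of_nonneg_left ih hC
        _ = C ^ (k + 1) * F t := by ring
  exact (hF hs (show (0 : ℝ) < 2 ^ k * t by positivity) hst).trans (iterate k)

theorem Metric.setOf_le_dist_and_dist_lt_eq_ball_diff_ball {X : Type*} [PseudoMetricSpace X]
    (z : X) (a b : ℝ) : {y | a ≤ dist z y ∧ dist z y < b} = ball z b \ ball z a := by
  ext y
  simp only [mem_ofPred_eq, mem_sdiff, mem_ball, dist_comm y z, not_lt]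
  tauto

theorem MeasureTheory.sub_one_mul_le_measure_diff {X : Type*} [MeasurableSpace X]
    {μ : Measure X} {s t : Set X} {c : ℝ≥0∞} (h : c * μ s ≤ μ t) (hs : μ s ≠ ∞) :
    (c - 1) * μ s ≤ μ (t \ s) :=
  calc (c - 1) * μ s = c * μ s - μ s := by rw [ENNReal.sub_mul fun _ _ ↦ hs, one_mul]
    _ ≤ μ t - μ s := tsub_le_tsub_right h _
    _ ≤ μ (t \ s) := le_measure_sdiff

theorem ENNReal.mul_mul_div_mul_mul_cancel {a b C D V : ℝ≥0∞} (hV₀ : V ≠ 0) (hV : V ≠ ∞) :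
    a * V * (b / (C * V * D)) = a * b / (C * D) := by
  rw [← mul_div_assoc, mul_right_comm a V b, mul_right_comm C V D,
    ENNReal.mul_div_mul_right _ _ hV₀ hV]

theorem MeasureTheory.le_setLIntegral_diff_of_mul_le {X : Type*} [MeasurableSpace X]
    {μ : Measure X} {s t : Set X} (hts : MeasurableSet (t \ s)) {c a C D : ℝ≥0∞}
    (h : c * μ s ≤ μ t) (hs₀ : μ s ≠ 0) (hs : μ s ≠ ∞) {f : X → ℝ≥0∞}
    (hf : ∀ y ∈ t \ s, a / (C * μ s * D) ≤ f y) :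
    (c - 1) * a / (C * D) ≤ ∫⁻ y in t \ s, f y ∂μ :=
  calc (c - 1) * a / (C * D) = (c - 1) * μ s * (a / (C * μ s * D)) :=
        (ENNReal.mul_mul_div_mul_mul_cancel hs₀ hs).symm
    _ ≤ μ (t \ s) * (a / (C * μ s * D)) := mul_le_mul_left (sub_one_mul_le_measure_diff h hs) _
    _ = ∫⁻ _ in t \ s, a / (C * μ s * D) ∂μ := by rw [setLIntegral_const, mul_comm]
    _ ≤ ∫⁻ y in t \ s, f y ∂μ := setLIntegral_mono' hts hf

theorem ENNReal.ofReal_sub_one_mul_div_pow_mul_div {c C : ℝ≥0} (hc : 1 ≤ c) (L : ℕ)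
    {κ E F : ℝ} (hEF : 0 < E * F) (hC : 0 < C) :
    ENNReal.ofReal (((c : ℝ) - 1) * κ / ((C : ℝ) ^ L * E) / F) =
      ((c : ℝ≥0∞) - 1) * ENNReal.ofReal κ / ((C : ℝ≥0∞) ^ L * ENNReal.ofReal (E * F)) := by
  have hc1 : (1 : ℝ) ≤ c := by exact_mod_cast hc
  rw [div_div, mul_assoc, ENNReal.ofReal_div_of_pos (by positivity),
    ENNReal.ofReal_mul (by linarith), ENNReal.ofReal_mul (by positivity),
    ENNReal.ofReal_pow (by positivity), ENNReal.ofReal_sub _ zero_le_one]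
  simp

section Annulus

variable {X : Type*} [PseudoMetricSpace X] [MeasurableSpace X] (m : Measure X) (z₀ : X)
  {Φ : ℝ → ℝ} {r₀ κ : ℝ} {j : X → ℝ≥0∞}

theorem jump_lower_bound_of_two_mul_dist_le (hΦ : MonotoneOn Φ (Ioi 0))
    (hjlow : ∀ s : ℝ, 0 < s → s ≤ r₀ → ∀ y : X, s / 2 ≤ dist z₀ y → dist z₀ y ≤ s →
      ENNReal.ofReal κ / (m (ball z₀ s) * ENNReal.ofReal (Φ s)) ≤ j y)
    {S : ℝ} (hS : S ≤ r₀) {y : X} (hy : 0 < dist z₀ y) (hyS : 2 * dist z₀ y ≤ S) :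
    ENNReal.ofReal κ / (m (ball z₀ S) * ENNReal.ofReal (Φ S)) ≤ j y := by
  have hs : 0 < 2 * dist z₀ y := by positivity
  refine le_trans ?_ (hjlow _ hs (hyS.trans hS) y (by linarith) (by linarith))
  gcongr
  exact hΦ hs (hs.trans_le hyS) hyS

theorem jump_lower_bound_on_annulus {C_V : ℝ≥0} {C_Φ : ℝ} (hCΦ : 0 ≤ C_Φ)
    (hVdoub : ∀ t : ℝ, 0 < t → m (ball z₀ (2 * t)) ≤ (C_V : ℝ≥0∞) * m (ball z₀ t))
    (hΦ : MonotoneOn Φ (Ioi 0)) (hΦdoub : ∀ t : ℝ, 0 < t → Φ (2 * t) ≤ C_Φ * Φ t)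
    (hjlow : ∀ s : ℝ, 0 < s → s ≤ r₀ → ∀ y : X, s / 2 ≤ dist z₀ y → dist z₀ y ≤ s →
      ENNReal.ofReal κ / (m (ball z₀ s) * ENNReal.ofReal (Φ s)) ≤ j y)
    {n : ℕ} {r : ℝ} (hr : 0 < r) (hnr : 4 * n * r ≤ r₀)
    {y : X} (hy : y ∈ ball z₀ (2 * n * r) \ ball z₀ (2 * r)) :
    ENNReal.ofReal κ / ((C_V : ℝ≥0∞) ^ (n + 1) * m (ball z₀ (2 * r)) *
      ENNReal.ofReal (C_Φ ^ (n + 2) * Φ r)) ≤ j y := by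
  obtain ⟨hyout, hyin⟩ := hy
  rw [mem_ball, dist_comm] at hyout
  rw [mem_ball, not_lt, dist_comm] at hyin
  have hS : 4 * n * r ≤ 2 ^ (n + 2) * r := by
    have : (n : ℝ) ≤ 2 ^ n := by exact_mod_cast Nat.lt_two_pow_self.le
    calc 4 * n * r ≤ 4 * 2 ^ n * r := by gcongr
      _ = 2 ^ (n + 2) * r := by ring
  have hS₀ : 0 < 4 * n * r := by linarith
  have hVmono : MonotoneOn (fun t ↦ m (ball z₀ t)) (Ioi 0) :=
    fun _ _ _ _ hst ↦ measure_mono (ball_subset_ball hst)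
  refine le_trans ?_ (jump_lower_bound_of_two_mul_dist_le m z₀ hΦ hjlow hnr
    (by linarith) (by linarith))
  gcongr
  · exact hVmono.le_pow_mul_of_le_two_pow_mul zero_le hVdoub _ hS₀
      (hS.trans_eq (by ring))
  · exact hΦ.le_pow_mul_of_le_two_pow_mul hCΦ hΦdoub _ hS₀ hS

end Annulus

theorem annulus_integral_lower_bound_small_scale_general
    {X : Type*} [MetricSpace X] [MeasurableSpace X] [BorelSpace X]
    (m : Measure X) (z₀ : X)
    (hVpos : ∀ t : ℝ, 0 < t → 0 < m (ball z₀ t))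
    (hVfin : ∀ t : ℝ, 0 < t → m (ball z₀ t) < ⊤)
    (C_V : ℝ≥0) (hCV : 1 < C_V)
    (hVdoub : ∀ t : ℝ, 0 < t → m (ball z₀ (2 * t)) ≤ (C_V : ℝ≥0∞) * m (ball z₀ t))
    (Φ : ℝ → ℝ) (hΦpos : ∀ t : ℝ, 0 < t → 0 < Φ t)
    (hΦmono : ∀ s t : ℝ, 0 < s → s ≤ t → Φ s ≤ Φ t)
    (C_Φ : ℝ) (hCΦ : 1 < C_Φ)
    (hΦdoub : ∀ t : ℝ, 0 < t → Φ (2 * t) ≤ C_Φ * Φ t)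
    (n₀ : ℕ) (c₂ : ℝ≥0) (hc₂ : 1 < c₂) (r₀ : ℝ)
    (hVrev : ∀ t : ℝ, 0 < t → t ≤ r₀ → (c₂ : ℝ≥0∞) * m (ball z₀ t) ≤ m (ball z₀ (n₀ * t)))
    (j : X → ℝ≥0∞) (κ : ℝ) (hκ : 0 < κ)
    (hjlow : ∀ s : ℝ, 0 < s → s ≤ r₀ → ∀ y : X, s / 2 ≤ dist z₀ y → dist z₀ y ≤ s →
      ENNReal.ofReal κ / (m (ball z₀ s) * ENNReal.ofReal (Φ s)) ≤ j y) :
    ∃ c : ℝ, 0 < c ∧ ∀ r : ℝ, 0 < r → r ≤ r₀ / (4 * n₀) →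
      ENNReal.ofReal (c / Φ r) ≤
        ∫⁻ y in {y : X | 2 * r ≤ dist z₀ y ∧ dist z₀ y < 2 * n₀ * r}, j y ∂m := by
  have hC_V : 0 < C_V := zero_lt_one.trans hCV
  have hc₂' : (1 : ℝ) < c₂ := by exact_mod_cast hc₂
  have hΦmono' : MonotoneOn Φ (Ioi 0) := fun s hs t _ hst ↦ hΦmono s t hs hst
  refine ⟨(c₂ - 1) * κ / (C_V ^ (n₀ + 1) * C_Φ ^ (n₀ + 2)),
    div_pos (mul_pos (by linarith) hκ) (by positivity), fun r hr hrle ↦ ?_⟩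
  have hn₀ : (1 : ℝ) ≤ n₀ := Nat.one_le_cast.mpr <| Nat.pos_of_ne_zero fun h ↦ by
    simp only [h, Nat.cast_zero, mul_zero, div_zero] at hrle
    linarith
  have h2r : 2 * r ≤ 2 * n₀ * r := by nlinarith
  have hSr₀ : 4 * n₀ * r ≤ r₀ := by rwa [le_div_iff₀ (by positivity), mul_comm] at hrle
  rw [setOf_le_dist_and_dist_lt_eq_ball_diff_ball, ENNReal.ofReal_sub_one_mul_div_pow_mul_div
    hc₂.le _ (mul_pos (by positivity) (hΦpos r hr)) hC_V]
  exact le_setLIntegral_diff_of_mul_le (measurableSet_ball.diff measurableSet_ball)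
    ((hVrev (2 * r) (by positivity) (by linarith)).trans_eq (by rw [mul_left_comm, ← mul_assoc]))
    (hVpos _ (by positivity)).ne' (hVfin _ (by positivity)).ne
    fun y hy ↦ jump_lower_bound_on_annulus m z₀ (by linarith) hVdoub hΦmono' hΦdoub hjlow hr hSr₀ hy

/-- Small-scale annulus lower bound for the jump intensity
(key estimate in the proof of Proposition 7.1 of the paper). -/
theorem annulus_integral_lower_bound_small_scale
    {X : Type*} [MetricSpace X] [MeasurableSpace X] [BorelSpace X]
    (m : Measure X) (z₀ : X)
    (hVpos : ∀ t : ℝ, 0 < t → 0 < m (ball z₀ t))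
    (hVfin : ∀ t : ℝ, 0 < t → m (ball z₀ t) < ⊤)
    (C_V : ℝ≥0) (hCV : 1 < C_V)
    (hVdoub : ∀ t : ℝ, 0 < t → m (ball z₀ (2 * t)) ≤ (C_V : ℝ≥0∞) * m (ball z₀ t))
    (Φ : ℝ → ℝ) (hΦpos : ∀ t : ℝ, 0 < t → 0 < Φ t)
    (hΦmono : ∀ s t : ℝ, 0 < s → s ≤ t → Φ s ≤ Φ t)
    (C_Φ : ℝ) (hCΦ : 1 < C_Φ)
    (hΦdoub : ∀ t : ℝ, 0 < t → Φ (2 * t) ≤ C_Φ * Φ t)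
    (n₀ : ℕ) (hn₀ : 2 ≤ n₀) (c₂ : ℝ≥0) (hc₂ : 1 < c₂) (r₀ : ℝ) (hr₀ : 0 < r₀)
    (hVrev : ∀ t : ℝ, 0 < t → t ≤ r₀ → (c₂ : ℝ≥0∞) * m (ball z₀ t) ≤ m (ball z₀ (n₀ * t)))
    (j : X → ℝ≥0∞) (hj : Measurable j) (κ : ℝ) (hκ : 0 < κ)
    (hjlow : ∀ s : ℝ, 0 < s → s ≤ r₀ → ∀ y : X, s / 2 ≤ dist z₀ y → dist z₀ y ≤ s →
      ENNReal.ofReal κ / (m (ball z₀ s) * ENNReal.ofReal (Φ s)) ≤ j y) :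
    ∃ c : ℝ, 0 < c ∧ ∀ r : ℝ, 0 < r → r ≤ r₀ / (4 * n₀) →
      ENNReal.ofReal (c / Φ r) ≤
        ∫⁻ y in {y : X | 2 * r ≤ dist z₀ y ∧ dist z₀ y < 2 * n₀ * r}, j y ∂m :=
  annulus_integral_lower_bound_small_scale_general m z₀ hVpos hVfin C_V hCV hVdoub Φ hΦpos hΦmono
    C_Φ hCΦ hΦdoub n₀ c₂ hc₂ r₀ hVrev j κ hκ hjlow
end

section
/- Let (𝔛,d) be a metric space equipped with a Borel measure m, let z₀ ∈ 𝔛, and set V(t) = m(B(z₀,t)), assumed finite and strictly positive for every t > 0. Assume there is C_V > 1 with V(2t) ≤ C_V V(t) for all t > 0, and that there exist a natural number n₀ ≥ 2, a constant c₂ > 1 and r₀ > 0 such that V(n₀ t) ≥ c₂ V(t) for all t ≥ r₀. Let Φ : (0,∞) → (0,∞) be nondecreasing with Φ(2t) ≤ C_Φ Φ(t) for all t > 0 for some C_Φ > 1. Let j : 𝔛 → [0,∞] be measurable and suppose there is κ > 0 such that j(y) ≥ κ/(V(s)Φ(s)) for every s ≥ r₀ and every y ∈ 𝔛 with s ≤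 d(z₀,y) ≤ 2s. Then there exists a constant c > 0, depending only on C_V, C_Φ, c₂, n₀ and κ (and in particular independent of r and b), such that for every b ∈ (1,2] and every r ≥ r₀ one has ∫_{{y : d(z₀,y) ≥ br}} j dm ≥ c/Φ(r). -/
/-!
Put `ρ = 2r` and choose `M`, `K` with `1 + C_V ≤ c₂ ^ M` and `n₀ ^ M ≤ 2 ^ K`. Reverse doubling
`M` times, followed by one volume doubling to control `B̄(z₀, ρ)`, shows that the annulus
`B(z₀, 2ᴷρ) \ B̄(z₀, ρ)` has measure at least `V(ρ)`; since `b ≤ 2` it lies in `{b r ≤ d(z₀, ·)}`.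
Each point of the annulus lies in a shell `s ≤ d(z₀, y) ≤ 2s` with `ρ ≤ s ≤ 2ᴷρ`, so there
`j ≥ κ / (V(2ᴷρ) Φ(2ᴷρ)) ≥ κ / (C_V ^ K C_Φ ^ (K + 1) Φ(r) V(ρ))`. Integrating over the annulus,
`V(ρ)` cancels.
-/

open MeasureTheory Metric Set
open scoped ENNReal NNReal

section Doubling

variable {α : Type*} [MonoidWithZero α] [Preorder α] [PosMulMono α] {F : ℝ → α}

theorem apply_two_pow_mul_le_pow_mul {C : α} (hC : 0 ≤ C)
    (hF : ∀ t : ℝ, 0 < t → F (2 * t) ≤ C * F t) (K : ℕ) {t : ℝ} (ht : 0 < t) :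
    F (2 ^ K * t) ≤ C ^ K * F t := by
  induction K with
  | zero => simp
  | succ K ih =>
    calc F (2 ^ (K + 1) * t) = F (2 * (2 ^ K * t)) := by ring_nf
      _ ≤ C * F (2 ^ K * t) := hF _ (by positivity)
      _ ≤ C * (C ^ K * F t) := mul_le_mul_of_nonneg_left ih hC
      _ = C ^ (K + 1) * F t := by rw [pow_succ', mul_assoc]

theorem pow_mul_le_apply_pow_mul {c : α} (hc : 0 ≤ c) {a r₀ : ℝ} (ha : 1 ≤ a) (hr₀ : 0 ≤ r₀)
    (hF : ∀ t : ℝ, r₀ ≤ t → c * F t ≤ F (a * t)) (M : ℕ) {t : ℝ} (ht : r₀ ≤ t) :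
    c ^ M * F t ≤ F (a ^ M * t) := by
  induction M with
  | zero => simp
  | succ M ih =>
    have hMt : r₀ ≤ a ^ M * t :=
      ht.trans (le_mul_of_one_le_left (hr₀.trans ht) (one_le_pow₀ ha))
    calc c ^ (M + 1) * F t = c * (c ^ M * F t) := by rw [pow_succ', mul_assoc]
      _ ≤ c * F (a ^ M * t) := mul_le_mul_of_nonneg_left ih hc
      _ ≤ F (a * (a ^ M * t)) := hF _ hMt
      _ = F (a ^ (M + 1) * t) := by ring_nf

end Doubling

theorem mul_measure_le_setLIntegral_of_subset {X : Type*} [MeasurableSpace X] {μ : Measure X}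
    {S T : Set X} {f : X → ℝ≥0∞} {c : ℝ≥0∞} (hS : MeasurableSet S) (hST : S ⊆ T)
    (hf : ∀ y ∈ S, c ≤ f y) : c * μ S ≤ ∫⁻ y in T, f y ∂μ :=
  calc c * μ S = ∫⁻ _ in S, c ∂μ := (setLIntegral_const S c).symm
    _ ≤ ∫⁻ y in S, f y ∂μ := setLIntegral_mono' hS hf
    _ ≤ ∫⁻ y in T, f y ∂μ := lintegral_mono_set hST

section Annulus

variable {X : Type*} [PseudoMetricSpace X] [MeasurableSpace X] (m : Measure X) (z₀ : X)

theorem measure_ball_le_measure_annulus {C_V c₂ : ℝ≥0} {n₀ : ℕ} {r₀ : ℝ}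
    (hVdoub : ∀ t : ℝ, 0 < t → m (ball z₀ (2 * t)) ≤ (C_V : ℝ≥0∞) * m (ball z₀ t))
    (hVrev : ∀ t : ℝ, r₀ ≤ t → (c₂ : ℝ≥0∞) * m (ball z₀ t) ≤ m (ball z₀ (n₀ * t)))
    (hn₀ : 1 ≤ n₀) (hr₀ : 0 ≤ r₀) {M K : ℕ} (hM : 1 + C_V ≤ c₂ ^ M)
    (hK : (n₀ : ℝ) ^ M ≤ 2 ^ K) {ρ : ℝ} (hρ : 0 < ρ) (hρ₀ : r₀ ≤ ρ)
    (hfin : m (ball z₀ (2 * ρ)) ≠ ∞) :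
    m (ball z₀ ρ) ≤ m (ball z₀ (2 ^ K * ρ) \ closedBall z₀ ρ) := by
  have hclosed : m (closedBall z₀ ρ) ≤ (C_V : ℝ≥0∞) * m (ball z₀ ρ) :=
    (measure_mono (closedBall_subset_ball (by linarith))).trans (hVdoub ρ hρ)
  have hsum : m (ball z₀ ρ) + m (closedBall z₀ ρ) ≤ m (ball z₀ (2 ^ K * ρ)) :=
    calc m (ball z₀ ρ) + m (closedBall z₀ ρ) ≤ (1 + C_V : ℝ≥0∞) * m (ball z₀ ρ) := by
          rw [add_mul, one_mul]; exact add_le_add_right hclosed _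
      _ ≤ (c₂ : ℝ≥0∞) ^ M * m (ball z₀ ρ) := mul_le_mul_left (by exact_mod_cast hM) _
      _ ≤ m (ball z₀ ((n₀ : ℝ) ^ M * ρ)) :=
          pow_mul_le_apply_pow_mul zero_le (by exact_mod_cast hn₀) hr₀ hVrev M hρ₀
      _ ≤ m (ball z₀ (2 ^ K * ρ)) :=
          measure_mono (ball_subset_ball (mul_le_mul_of_nonneg_right hK hρ.le))
  have hclosed_ne_top : m (closedBall z₀ ρ) ≠ ∞ :=
    ne_top_of_le_ne_top hfin (measure_mono (closedBall_subset_ball (by linarith)))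
  exact (ENNReal.le_sub_of_add_le_right hclosed_ne_top hsum).trans le_measure_sdiff

variable {r₀ κ : ℝ} {Φ : ℝ → ℝ} {j : X → ℝ≥0∞}
  (hjlow : ∀ s : ℝ, r₀ ≤ s → ∀ y : X, s ≤ dist z₀ y → dist z₀ y ≤ 2 * s →
    ENNReal.ofReal κ / (m (ball z₀ s) * ENNReal.ofReal (Φ s)) ≤ j y)
include hjlow

theorem div_measure_ball_mul_le_of_mem_shell
    (hΦmono : ∀ s t : ℝ, 0 < s → s ≤ t → Φ s ≤ Φ t)
    {ρ R : ℝ} (hρ : 0 < ρ) (hρ₀ : r₀ ≤ ρ) (hρR : ρ ≤ R) {y : X}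
    (hy : ρ ≤ dist z₀ y) (hy' : dist z₀ y ≤ 2 * R) :
    ENNReal.ofReal κ / (m (ball z₀ R) * ENNReal.ofReal (Φ R)) ≤ j y := by
  set s := max ρ (dist z₀ y / 2)
  have hρs : ρ ≤ s := le_max_left _ _
  have hsR : s ≤ R := max_le hρR (by linarith)
  have hshell : s ≤ dist z₀ y ∧ dist z₀ y ≤ 2 * s :=
    ⟨max_le hy (by linarith), by linarith [le_max_right ρ (dist z₀ y / 2)]⟩
  refine le_trans ?_ (hjlow s (hρ₀.trans hρs) y hshell.1 hshell.2)
  exact ENNReal.div_le_div_left (mul_le_mul' (measure_mono (ball_subset_ball hsR))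
    (ENNReal.ofReal_le_ofReal (hΦmono _ _ (hρ.trans_le hρs) hsR))) _

theorem div_mul_measure_ball_le_of_mem_annulus {C_V : ℝ≥0} {C_Φ : ℝ}
    (hVdoub : ∀ t : ℝ, 0 < t → m (ball z₀ (2 * t)) ≤ (C_V : ℝ≥0∞) * m (ball z₀ t))
    (hΦmono : ∀ s t : ℝ, 0 < s → s ≤ t → Φ s ≤ Φ t) (hCΦ : 0 ≤ C_Φ)
    (hΦdoub : ∀ t : ℝ, 0 < t → Φ (2 * t) ≤ C_Φ * Φ t)
    (K : ℕ) {r : ℝ} (hr : 0 < r) (hr₀ : r₀ ≤ 2 * r) {y : X}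
    (hy : y ∈ ball z₀ (2 ^ K * (2 * r)) \ closedBall z₀ (2 * r)) :
    ENNReal.ofReal κ / (ENNReal.ofReal (C_V ^ K * C_Φ ^ (K + 1) * Φ r) * m (ball z₀ (2 * r)))
      ≤ j y := by
  obtain ⟨hyR, hyρ⟩ := hy
  rw [mem_ball'] at hyR
  rw [mem_closedBall', not_le] at hyρ
  have hV : m (ball z₀ (2 ^ K * (2 * r))) ≤ (C_V : ℝ≥0∞) ^ K * m (ball z₀ (2 * r)) :=
    apply_two_pow_mul_le_pow_mul (F := fun t => m (ball z₀ t)) zero_le hVdoub K (by positivity)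
  have hΦ : Φ (2 ^ K * (2 * r)) ≤ C_Φ ^ (K + 1) * Φ r := by
    rw [show (2 : ℝ) ^ K * (2 * r) = 2 ^ (K + 1) * r by ring]
    exact apply_two_pow_mul_le_pow_mul hCΦ hΦdoub (K + 1) hr
  refine le_trans (ENNReal.div_le_div_left ?_ _) (div_measure_ball_mul_le_of_mem_shell m z₀
    hjlow hΦmono (by positivity) hr₀ (le_mul_of_one_le_left (by positivity)
      (one_le_pow₀ one_le_two)) hyρ.le (by linarith [dist_nonneg (x := z₀) (y := y)]))
  calc m (ball z₀ (2 ^ K * (2 * r))) * ENNReal.ofReal (Φ (2 ^ K * (2 * r)))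
      ≤ (C_V : ℝ≥0∞) ^ K * m (ball z₀ (2 * r)) * ENNReal.ofReal (C_Φ ^ (K + 1) * Φ r) :=
        mul_le_mul' hV (ENNReal.ofReal_le_ofReal hΦ)
    _ = ENNReal.ofReal (C_V ^ K * C_Φ ^ (K + 1) * Φ r) * m (ball z₀ (2 * r)) := by
        rw [mul_assoc ((C_V : ℝ) ^ K), ENNReal.ofReal_mul (p := (C_V : ℝ) ^ K) (by positivity),
          ENNReal.ofReal_pow C_V.coe_nonneg, ENNReal.ofReal_coe_nnreal]
        ring

end Annulus

theorem tail_integral_lower_bound_uniform_in_b_general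
    {X : Type*} [MetricSpace X] [MeasurableSpace X] [BorelSpace X]
    (m : Measure X) (z₀ : X)
    (hVpos : ∀ t : ℝ, 0 < t → 0 < m (ball z₀ t))
    (hVfin : ∀ t : ℝ, 0 < t → m (ball z₀ t) < ⊤)
    (C_V : ℝ≥0) (hCV : 1 < C_V)
    (hVdoub : ∀ t : ℝ, 0 < t → m (ball z₀ (2 * t)) ≤ (C_V : ℝ≥0∞) * m (ball z₀ t))
    (n₀ : ℕ) (hn₀ : 2 ≤ n₀) (c₂ : ℝ≥0) (hc₂ : 1 < c₂) (r₀ : ℝ) (hr₀ : 0 < r₀)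
    (hVrev : ∀ t : ℝ, r₀ ≤ t → (c₂ : ℝ≥0∞) * m (ball z₀ t) ≤ m (ball z₀ (n₀ * t)))
    (Φ : ℝ → ℝ) (hΦpos : ∀ t : ℝ, 0 < t → 0 < Φ t)
    (hΦmono : ∀ s t : ℝ, 0 < s → s ≤ t → Φ s ≤ Φ t)
    (C_Φ : ℝ) (hCΦ : 1 < C_Φ)
    (hΦdoub : ∀ t : ℝ, 0 < t → Φ (2 * t) ≤ C_Φ * Φ t)
    (j : X → ℝ≥0∞) (κ : ℝ) (hκ : 0 < κ)
    (hjlow : ∀ s : ℝ, r₀ ≤ s → ∀ y : X, s ≤ dist z₀ y → dist z₀ y ≤ 2 * s →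
      ENNReal.ofReal κ / (m (ball z₀ s) * ENNReal.ofReal (Φ s)) ≤ j y) :
    ∃ c : ℝ, 0 < c ∧ ∀ b : ℝ, 1 < b → b ≤ 2 → ∀ r : ℝ, r₀ ≤ r →
      ENNReal.ofReal (c / Φ r) ≤ ∫⁻ y in {y : X | b * r ≤ dist z₀ y}, j y ∂m := by
  obtain ⟨M, hM⟩ : ∃ M : ℕ, 1 + C_V < c₂ ^ M := pow_unbounded_of_one_lt _ hc₂
  obtain ⟨K, hK⟩ : ∃ K : ℕ, (n₀ : ℝ) ^ M < 2 ^ K := pow_unbounded_of_one_lt _ one_lt_two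
  have hCV0 : (0 : ℝ) < C_V := zero_lt_one.trans hCV
  have hCΦ0 : 0 < C_Φ := zero_lt_one.trans hCΦ
  refine ⟨κ / (C_V ^ K * C_Φ ^ (K + 1)), by positivity, fun b _ hb2 r hr => ?_⟩
  have hr0 : 0 < r := hr₀.trans_le hr
  have hΦr := hΦpos r hr0
  have hV0 : m (ball z₀ (2 * r)) ≠ 0 := (hVpos _ (by positivity)).ne'
  have hVtop : m (ball z₀ (2 * r)) ≠ ∞ := (hVfin _ (by positivity)).ne
  have hsub : ball z₀ (2 ^ K * (2 * r)) \ closedBall z₀ (2 * r) ⊆ {y | b * r ≤ dist z₀ y} := by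
    rintro y ⟨-, hy⟩
    rw [mem_closedBall', not_le] at hy
    exact ((mul_le_mul_of_nonneg_right hb2 hr0.le).trans_lt hy).le
  calc ENNReal.ofReal (κ / (C_V ^ K * C_Φ ^ (K + 1)) / Φ r)
      = ENNReal.ofReal κ / (ENNReal.ofReal (C_V ^ K * C_Φ ^ (K + 1) * Φ r) *
          m (ball z₀ (2 * r))) * m (ball z₀ (2 * r)) := by
        rw [ENNReal.div_mul _ (Or.inr hV0) (Or.inr hVtop), ENNReal.mul_div_cancel_right hV0 hVtop,
          div_div, ENNReal.ofReal_div_of_pos (by positivity)]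
    _ ≤ _ := mul_le_mul_right (measure_ball_le_measure_annulus m z₀ hVdoub hVrev
        (by omega) hr₀.le (by exact_mod_cast hM.le) hK.le (by positivity) (by linarith)
        (hVfin _ (by positivity)).ne) _
    _ ≤ _ := mul_measure_le_setLIntegral_of_subset
        (measurableSet_ball.diff measurableSet_closedBall) hsub
        fun y hy => div_mul_measure_ball_le_of_mem_annulus m z₀ hjlow hVdoub hΦmono hCΦ0.le
          hΦdoub K hr0 (by linarith) hy

/-- Display (3.7) in Section 3 of the paper:
`∫_{B̄(z₀,br)ᶜ} j(z₀,z) m(dz) ≥ c₄/Φ(r)` for every `b ∈ (1,2]` and all `r ≥ r₀`,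
with the constant independent of `r` and `b`. -/
theorem tail_integral_lower_bound_uniform_in_b
    {X : Type*} [MetricSpace X] [MeasurableSpace X] [BorelSpace X]
    (m : Measure X) (z₀ : X)
    (hVpos : ∀ t : ℝ, 0 < t → 0 < m (ball z₀ t))
    (hVfin : ∀ t : ℝ, 0 < t → m (ball z₀ t) < ⊤)
    (C_V : ℝ≥0) (hCV : 1 < C_V)
    (hVdoub : ∀ t : ℝ, 0 < t → m (ball z₀ (2 * t)) ≤ (C_V : ℝ≥0∞) * m (ball z₀ t))
    (n₀ : ℕ) (hn₀ : 2 ≤ n₀) (c₂ : ℝ≥0) (hc₂ : 1 < c₂) (r₀ : ℝ) (hr₀ : 0 < r₀)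
    (hVrev : ∀ t : ℝ, r₀ ≤ t → (c₂ : ℝ≥0∞) * m (ball z₀ t) ≤ m (ball z₀ (n₀ * t)))
    (Φ : ℝ → ℝ) (hΦpos : ∀ t : ℝ, 0 < t → 0 < Φ t)
    (hΦmono : ∀ s t : ℝ, 0 < s → s ≤ t → Φ s ≤ Φ t)
    (C_Φ : ℝ) (hCΦ : 1 < C_Φ)
    (hΦdoub : ∀ t : ℝ, 0 < t → Φ (2 * t) ≤ C_Φ * Φ t)
    (j : X → ℝ≥0∞) (hj : Measurable j) (κ : ℝ) (hκ : 0 < κ)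
    (hjlow : ∀ s : ℝ, r₀ ≤ s → ∀ y : X, s ≤ dist z₀ y → dist z₀ y ≤ 2 * s →
      ENNReal.ofReal κ / (m (ball z₀ s) * ENNReal.ofReal (Φ s)) ≤ j y) :
    ∃ c : ℝ, 0 < c ∧ ∀ b : ℝ, 1 < b → b ≤ 2 → ∀ r : ℝ, r₀ ≤ r →
      ENNReal.ofReal (c / Φ r) ≤ ∫⁻ y in {y : X | b * r ≤ dist z₀ y}, j y ∂m :=
  tail_integral_lower_bound_uniform_in_b_general m z₀ hVpos hVfin C_V hCV hVdoub n₀ hn₀ c₂ hc₂ r₀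
    hr₀ hVrev Φ hΦpos hΦmono C_Φ hCΦ hΦdoub j κ hκ hjlow
end
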